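/- arXiv:1611.04771 — 3 statements merged into one kernel-verified Lean document; each statement's English description precedes it below -/
import Mathlib

section
/- Let H be a real Hilbert space, S : H → H a bounded self-adjoint operator, ψ, w ∈ H unit vectors with ⟨w,ψ⟩ = 0 and Sψ = 0. Suppose there is c₅ > 0 such that ⟨Sz,z⟩ ≥ c₅‖z‖² for all z ⊥ ψ with z ⊥ w. Then there exist σ > 0 and c₆ > 0 such that for all v ⊥ ψ: ⟨Sv,v⟩ + 2σ⟨w,v⟩² ≥ c₆‖v‖². -/
/-!
Write `v ⊥ ψ` as `v = a • w + z` with `a = ⟪w, v⟫`, so that `z ⊥ ψ, w` and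
`‖v‖² = a² + ‖z‖²`. Then `⟪S v, v⟫ = a² ⟪S w, w⟫ + 2a ⟪S w, z⟫ + ⟪S z, z⟫`; the cross term is
absorbed by Young's inequality into half of the coercivity `c₅ ‖z‖²` at the cost of
`(2 / c₅) a² ‖S w‖²`, and the penalty `2σa²` pays for that and for a possibly negative `⟪S w, w⟫`.
-/

open RealInnerProductSpace

section

variable {H : Type*} [NormedAddCommGroup H] [InnerProductSpace ℝ H]

theorem neg_le_two_mul_real_inner {ε : ℝ} (hε : 0 < ε) (x y : H) :
    -(ε * ‖x‖ ^ 2 + ε⁻¹ * ‖y‖ ^ 2) ≤ 2 * ⟪x, y⟫ := by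
  have hsq : 0 ≤ ‖ε • x + y‖ ^ 2 := sq_nonneg _
  rw [norm_add_sq_real, norm_smul, real_inner_smul_left, Real.norm_of_nonneg hε.le] at hsq
  have hdiv : 0 ≤ ε⁻¹ * (ε ^ 2 * ‖x‖ ^ 2 + 2 * ε * ⟪x, y⟫ + ‖y‖ ^ 2) :=
    mul_nonneg (inv_nonneg.mpr hε.le) (by linarith)
  have hexpand : ε⁻¹ * (ε ^ 2 * ‖x‖ ^ 2 + 2 * ε * ⟪x, y⟫ + ‖y‖ ^ 2)
      = ε * ‖x‖ ^ 2 + 2 * ⟪x, y⟫ + ε⁻¹ * ‖y‖ ^ 2 := by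
    field_simp
  linarith

theorem LinearMap.IsSymmetric.inner_map_smul_add_self {T : H →ₗ[ℝ] H} (hT : T.IsSymmetric)
    (a : ℝ) (w z : H) :
    ⟪T (a • w + z), a • w + z⟫ = a ^ 2 * ⟪T w, w⟫ + 2 * a * ⟪T w, z⟫ + ⟪T z, z⟫ := by
  have hzw : ⟪T z, w⟫ = ⟪T w, z⟫ := by rw [hT z w, real_inner_comm]
  simp only [map_add, map_smul, inner_add_left, inner_add_right, real_inner_smul_left,
    real_inner_smul_right, hzw]
  ring

theorem norm_smul_add_sq_of_inner_eq_zero {w z : H} (hw : ‖w‖ = 1) (hwz : ⟪w, z⟫ = 0) (a : ℝ) :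
    ‖a • w + z‖ ^ 2 = a ^ 2 + ‖z‖ ^ 2 := by
  rw [norm_add_sq_real, real_inner_smul_left, hwz, norm_smul, hw, mul_one,
    Real.norm_eq_abs, sq_abs]
  ring

theorem LinearMap.IsSymmetric.half_coercive_add_penalty {T : H →ₗ[ℝ] H} (hT : T.IsSymmetric)
    {w : H} (hw : ‖w‖ = 1) {c σ : ℝ} (hc : 0 < c)
    (hσ : c / 2 ≤ ⟪T w, w⟫ - 2 / c * ‖T w‖ ^ 2 + 2 * σ)
    {z : H} (hzw : ⟪z, w⟫ = 0) (hz : c * ‖z‖ ^ 2 ≤ ⟪T z, z⟫) (a : ℝ) :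
    c / 2 * ‖a • w + z‖ ^ 2 ≤ ⟪T (a • w + z), a • w + z⟫ + 2 * σ * a ^ 2 := by
  have hyoung := neg_le_two_mul_real_inner (div_pos two_pos hc) (a • T w) z
  rw [real_inner_smul_left, norm_smul, Real.norm_eq_abs, mul_pow, sq_abs, inv_div] at hyoung
  have hpenalty := mul_le_mul_of_nonneg_left hσ (sq_nonneg a)
  rw [hT.inner_map_smul_add_self,
    norm_smul_add_sq_of_inner_eq_zero hw ((real_inner_comm z w).trans hzw)]
  nlinarith

end

theorem stmt2_general {H : Type*} [NormedAddCommGroup H] [InnerProductSpace ℝ H]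
    (S : H →L[ℝ] H) (hsa : ∀ x y : H, ⟪S x, y⟫ = ⟪x, S y⟫)
    (ψ w : H) (hw : ‖w‖ = 1) (hwψ : ⟪w, ψ⟫ = 0)
    (c₅ : ℝ) (hc₅ : 0 < c₅)
    (hcoer : ∀ z : H, ⟪z, ψ⟫ = 0 → ⟪z, w⟫ = 0 → ⟪S z, z⟫ ≥ c₅ * ‖z‖ ^ 2) :
    ∃ σ > (0 : ℝ), ∃ c₆ > (0 : ℝ), ∀ v : H, ⟪v, ψ⟫ = 0 →
      ⟪S v, v⟫ + 2 * σ * ⟪w, v⟫ ^ 2 ≥ c₆ * ‖v‖ ^ 2 := by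
  have hS : (S : H →ₗ[ℝ] H).IsSymmetric := hsa
  set σ : ℝ := c₅ / 4 + |⟪S w, w⟫| / 2 + ‖S w‖ ^ 2 / c₅ with hσdef
  have hσ : c₅ / 2 ≤ ⟪S w, w⟫ - 2 / c₅ * ‖S w‖ ^ 2 + 2 * σ := by
    have habs := neg_abs_le ⟪S w, w⟫
    have hdiv : 2 / c₅ * ‖S w‖ ^ 2 = 2 * (‖S w‖ ^ 2 / c₅) := by ring
    rw [hσdef]
    linarith
  refine ⟨σ, by positivity, c₅ / 2, by positivity, fun v hvψ => ?_⟩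
  set a := ⟪w, v⟫
  set z := v - a • w
  have hzw : ⟪z, w⟫ = 0 := by
    rw [inner_sub_left, real_inner_smul_left, real_inner_self_eq_norm_sq, hw, real_inner_comm]
    ring
  have hzψ : ⟪z, ψ⟫ = 0 := by
    rw [inner_sub_left, real_inner_smul_left, hvψ, hwψ, mul_zero, sub_zero]
  have hv : a • w + z = v := add_sub_cancel _ _
  exact hv ▸ hS.half_coercive_add_penalty hw hc₅ hσ hzw (hcoer z hzψ hzw) a

/-- coercivity of the augmented quadratic form
`⟪Sv,v⟫ + 2σ⟪w,v⟫²` on the orthogonal complement of `ψ`. -/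
theorem stmt2 {H : Type*} [NormedAddCommGroup H] [InnerProductSpace ℝ H] [CompleteSpace H]
    (S : H →L[ℝ] H) (hsa : ∀ x y : H, ⟪S x, y⟫ = ⟪x, S y⟫)
    (ψ w : H) (hψ : ‖ψ‖ = 1) (hSψ : S ψ = 0) (hw : ‖w‖ = 1) (hwψ : ⟪w, ψ⟫ = 0)
    (c₅ : ℝ) (hc₅ : 0 < c₅)
    (hcoer : ∀ z : H, ⟪z, ψ⟫ = 0 → ⟪z, w⟫ = 0 → ⟪S z, z⟫ ≥ c₅ * ‖z‖ ^ 2) :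
    ∃ σ > (0 : ℝ), ∃ c₆ > (0 : ℝ), ∀ v : H, ⟪v, ψ⟫ = 0 →
      ⟪S v, v⟫ + 2 * σ * ⟪w, v⟫ ^ 2 ≥ c₆ * ‖v‖ ^ 2 :=
  stmt2_general S hsa ψ w hw hwψ c₅ hc₅ hcoer
end

section
/- Let L > 0, δ > 0, and define θ(κ) = (2πκ/L)·coth(2πκδ/L) − 1/δ for nonzero integers κ. If κ₀ is a positive integer with δ > L/(κ₀π), then ϑ₀ := 2π/L − 2/(κ₀δ) > 0, and for every 0 < υ₁ < ϑ₀ and every integer κ with |κ| ≥ κ₀, one has υ₁|κ| ≤ θ(κ) ≤ (2π/L)|κ|. -/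
/-!
Writing `x = 2πκδ/L`, the symbol is `θ(κ) = (x coth x − 1)/δ`, and `x ↦ x coth x` is even with
`|x| ≤ x coth x ≤ |x| + 1` (the upper bound is `cosh x − sinh x = e^{−x} ≤ 1 ≤ sinh x / x`).
Hence `2π|κ|/L − 1/δ ≤ θ(κ) ≤ 2π|κ|/L`, and for `|κ| ≥ κ₀` the loss `1/δ` is at most
`2|κ|/(κ₀δ)`, which `δ > L/(κ₀π)` makes smaller than `2π|κ|/L`.
-/

open Real

namespace Real

lemma mul_cosh_div_sinh_neg (x : ℝ) :
    -x * (cosh (-x) / sinh (-x)) = x * (cosh x / sinh x) := by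
  rw [cosh_neg, sinh_neg, div_neg, neg_mul_neg]

lemma mul_cosh_div_sinh_abs (x : ℝ) :
    |x| * (cosh |x| / sinh |x|) = x * (cosh x / sinh x) := by
  rcases abs_choice x with h | h <;> rw [h]
  exact mul_cosh_div_sinh_neg x

lemma self_le_mul_cosh_div_sinh {x : ℝ} (hx : 0 ≤ x) : x ≤ x * (cosh x / sinh x) := by
  rcases hx.eq_or_lt with rfl | hx
  · simp
  have hsinh : 0 < sinh x := sinh_pos_iff.mpr hx
  have hcoth : 1 ≤ cosh x / sinh x := (one_le_div hsinh).mpr (sinh_lt_cosh x).le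
  simpa using mul_le_mul_of_nonneg_left hcoth hx.le

lemma mul_cosh_div_sinh_le {x : ℝ} (hx : 0 ≤ x) : x * (cosh x / sinh x) ≤ x + 1 := by
  rcases hx.eq_or_lt with rfl | hx
  · simp
  have hsinh : 0 < sinh x := sinh_pos_iff.mpr hx
  have hgap : cosh x - sinh x ≤ 1 := by
    rw [cosh_sub_sinh, exp_le_one_iff]; linarith
  have hself : x ≤ sinh x := self_le_sinh_iff.mpr hx.le
  rw [mul_div_assoc', div_le_iff₀ hsinh]
  nlinarith

lemma abs_le_mul_cosh_div_sinh (x : ℝ) : |x| ≤ x * (cosh x / sinh x) := by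
  rw [← mul_cosh_div_sinh_abs]
  exact self_le_mul_cosh_div_sinh (abs_nonneg x)

lemma mul_cosh_div_sinh_le_abs_add_one (x : ℝ) : x * (cosh x / sinh x) ≤ |x| + 1 := by
  rw [← mul_cosh_div_sinh_abs]
  exact mul_cosh_div_sinh_le (abs_nonneg x)

end Real

section ILWSymbol

variable {L δ : ℝ}

lemma ilwSymbol_eq (hL : 0 < L) (hδ : 0 < δ) (y : ℝ) :
    (2 * π * y / L) * (cosh (2 * π * y * δ / L) / sinh (2 * π * y * δ / L)) - 1 / δ
      = ((2 * π * y * δ / L) * (cosh (2 * π * y * δ / L) / sinh (2 * π * y * δ / L)) - 1)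
        / δ := by
  field_simp

lemma ilwSymbol_bounds (hL : 0 < L) (hδ : 0 < δ) (y : ℝ) :
    2 * π / L * |y| - 1 / δ
        ≤ (2 * π * y / L) * (cosh (2 * π * y * δ / L) / sinh (2 * π * y * δ / L)) - 1 / δ ∧
      (2 * π * y / L) * (cosh (2 * π * y * δ / L) / sinh (2 * π * y * δ / L)) - 1 / δ
        ≤ 2 * π / L * |y| := by
  have habs : |2 * π * y * δ / L| = 2 * π / L * |y| * δ := by
    rw [abs_div, abs_mul, abs_mul, abs_of_pos hL, abs_of_pos hδ,
      abs_of_pos (by positivity : (0 : ℝ) < 2 * π)]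
    ring
  have hlow := abs_le_mul_cosh_div_sinh (2 * π * y * δ / L)
  have hup := mul_cosh_div_sinh_le_abs_add_one (2 * π * y * δ / L)
  rw [habs] at hlow hup
  rw [ilwSymbol_eq hL hδ]
  constructor
  · rw [le_div_iff₀ hδ, sub_mul, div_mul_cancel₀ 1 hδ.ne']
    linarith
  · rw [div_le_iff₀ hδ]
    linarith

lemma two_div_mul_lt_two_pi_div {κ₀ : ℝ} (hL : 0 < L) (hδ : 0 < δ) (hκ₀ : 0 < κ₀)
    (hδL : L / (κ₀ * π) < δ) :
    2 / (κ₀ * δ) < 2 * π / L := by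
  rw [div_lt_iff₀ (by positivity)] at hδL
  rw [div_lt_div_iff₀ (by positivity) hL]
  nlinarith [pi_pos]

lemma sub_two_div_mul_le_sub_one_div {κ₀ c : ℝ} (hδ : 0 < δ) (hκ₀ : 0 < κ₀) (hc : κ₀ ≤ c) :
    (2 * π / L - 2 / (κ₀ * δ)) * c ≤ 2 * π / L * c - 1 / δ := by
  have hloss : 1 / δ ≤ 2 / (κ₀ * δ) * c := by
    rw [div_mul_eq_mul_div, div_le_div_iff₀ hδ (by positivity)]
    nlinarith
  linarith [sub_mul (2 * π / L) (2 / (κ₀ * δ)) c]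

end ILWSymbol

/-- bounds on the Fourier symbol
`θ(κ) = (2πκ/L) coth(2πκδ/L) − 1/δ` of the ILW dispersion operator. -/
theorem stmt7 (L δ : ℝ) (hL : 0 < L) (hδ : 0 < δ) (κ₀ : ℤ) (hκ₀ : 0 < κ₀)
    (hδL : δ > L / (κ₀ * π))
    (θ : ℤ → ℝ)
    (hθ : ∀ κ : ℤ, κ ≠ 0 →
      θ κ = (2 * π * κ / L) * (Real.cosh (2 * π * κ * δ / L) / Real.sinh (2 * π * κ * δ / L))
        - 1 / δ) :
    0 < 2 * π / L - 2 / (κ₀ * δ) ∧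
      ∀ υ₁ : ℝ, 0 < υ₁ → υ₁ < 2 * π / L - 2 / (κ₀ * δ) →
        ∀ κ : ℤ, κ₀ ≤ |κ| →
          υ₁ * |(κ : ℝ)| ≤ θ κ ∧ θ κ ≤ (2 * π / L) * |(κ : ℝ)| := by
  have hκ₀' : (0 : ℝ) < κ₀ := Int.cast_pos.mpr hκ₀
  refine ⟨sub_pos.mpr (two_div_mul_lt_two_pi_div hL hδ hκ₀' hδL), fun υ₁ _ hυ₁ κ hκ => ?_⟩
  have hκ' : (κ₀ : ℝ) ≤ |(κ : ℝ)| := by exact_mod_cast hκ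
  have hκne : κ ≠ 0 := by rintro rfl; simp at hκ; omega
  obtain ⟨hlow, hup⟩ := ilwSymbol_bounds hL hδ (κ : ℝ)
  rw [hθ κ hκne]
  refine ⟨?_, hup⟩
  calc υ₁ * |(κ : ℝ)| ≤ (2 * π / L - 2 / (κ₀ * δ)) * |(κ : ℝ)| :=
        mul_le_mul_of_nonneg_right hυ₁.le (abs_nonneg _)
    _ ≤ 2 * π / L * |(κ : ℝ)| - 1 / δ := sub_two_div_mul_le_sub_one_div hδ hκ₀' hκ'
    _ ≤ _ := hlow
end

section
/- Let H be a real Hilbert space, L a symmetric bilinear form on a dense subspace D ⊆ H, and suppose H = span{χ} ⊕ span{ψ} ⊕ P orthogonally, with ‖χ‖ = 1, L(χ,v) = −λ₀²⟨χ,v⟩ for all v ∈ D (λ₀ ≠ 0), L(ψ,v) = 0 for all v ∈ D, and L(p,p) ≥ c₈‖p‖² for all p ∈ P ∩ D. Let Φ ∈ D satisfy L(Φ,Φ) < 0, and decompose Φ = a₀χ + b₀ψ + p₀. If φ̃ ∈ D with ‖φ̃‖ = 1, ⟨φ̃, ψ⟩ = 0, L(Φ, φ̃) = 0, and φ̃ =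 a₁χ + p₁ with p₁ ∈ P ∩ D, then a₀a₁λ₀² = L(p₀, p₁), and consequently L(φ̃, φ̃) > 0. -/
open RealInnerProductSpace

/-!
Since `χ` is an eigenvector, `ψ` lies in the kernel and `L` is symmetric, `L` splits along the
decomposition: `L(a•χ + b•ψ + p, a'•χ + b'•ψ + q) = -a a' λ₀² + L(p, q)`. The constraint
`L(Φ, φ̃) = 0` is then the identity `a₀ a₁ λ₀² = L(p₀, p₁)`, and `L(Φ, Φ) < 0` reads
`L(p₀, p₀) < a₀² λ₀²`. If `a₁ = 0` then `φ̃ = p₁` is a unit vector of `P` and coercivity applies;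
otherwise Cauchy–Schwarz for `L` on `P ⊓ D` gives
`a₀² λ₀² · a₁² λ₀² = L(p₀, p₁)² ≤ L(p₀, p₀) L(p₁, p₁) < a₀² λ₀² · L(p₁, p₁)`,
i.e. `L(φ̃, φ̃) = -a₁² λ₀² + L(p₁, p₁) > 0`.
-/

lemma LinearMap.sq_apply_le_mul_of_nonneg_on {M : Type*} [AddCommGroup M] [Module ℝ M]
    (L : M →ₗ[ℝ] M →ₗ[ℝ] ℝ) (hsymm : ∀ v w, L v w = L w v) (S : Submodule ℝ M)
    (hS : ∀ p ∈ S, 0 ≤ L p p) {p q : M} (hp : p ∈ S) (hq : q ∈ S) :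
    L p q ^ 2 ≤ L p p * L q q := by
  have h := LinearMap.BilinForm.apply_mul_apply_le_of_forall_zero_le
    (L.compl₁₂ S.subtype S.subtype) (fun x ↦ hS x x.2) ⟨p, hp⟩ ⟨q, hq⟩
  simpa [sq, hsymm q p] using h

lemma apply_smul_add_smul_add_eq {H : Type*} [NormedAddCommGroup H] [InnerProductSpace ℝ H]
    {D : Submodule ℝ H} {L : H →ₗ[ℝ] H →ₗ[ℝ] ℝ}
    (hsymm : ∀ v w, L v w = L w v) {χ ψ : H} (hχ : ‖χ‖ = 1) (hχψ : ⟪χ, ψ⟫ = 0) {lam₀ : ℝ}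
    (hLχ : ∀ v ∈ D, L χ v = -lam₀ ^ 2 * ⟪χ, v⟫) (hLψ : ∀ v ∈ D, L ψ v = 0)
    {a b a' b' : ℝ} {p q : H} (hpD : p ∈ D) (hχp : ⟪χ, p⟫ = 0) (hχq : ⟪χ, q⟫ = 0)
    (hw : a' • χ + b' • ψ + q ∈ D) :
    L (a • χ + b • ψ + p) (a' • χ + b' • ψ + q) = -(a * a' * lam₀ ^ 2) + L p q := by
  have hχχ : ⟪χ, χ⟫ = 1 := by simp [hχ]
  have hLχw : L χ (a' • χ + b' • ψ + q) = -(a' * lam₀ ^ 2) := by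
    rw [hLχ _ hw]
    simp only [inner_add_right, inner_smul_right, hχχ, hχψ, hχq]
    ring
  have hLpw : L p (a' • χ + b' • ψ + q) = L p q := by
    rw [hsymm, hsymm p q]
    simp only [map_add, map_smul, LinearMap.add_apply, LinearMap.smul_apply, hLχ p hpD,
      hLψ p hpD, hχp, smul_eq_mul]
    ring
  rw [LinearMap.map_add₂, LinearMap.map_add₂, LinearMap.map_smul₂, LinearMap.map_smul₂, hLχw,
    hLψ _ hw, hLpw, smul_eq_mul, smul_eq_mul]
  ring

theorem stmt11_general {H : Type*} [NormedAddCommGroup H] [InnerProductSpace ℝ H]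
    (D : Submodule ℝ H)
    (L : H →ₗ[ℝ] H →ₗ[ℝ] ℝ) (hsymm : ∀ v w : H, L v w = L w v)
    (χ ψ : H) (hχ : ‖χ‖ = 1) (hχψ : ⟪χ, ψ⟫ = 0)
    (P : Submodule ℝ H) (hPχ : ∀ p ∈ P, ⟪χ, p⟫ = 0)
    (lam₀ : ℝ) (hlam₀ : lam₀ ≠ 0)
    (hLχ : ∀ v ∈ D, L χ v = -lam₀ ^ 2 * ⟪χ, v⟫)
    (hLψ : ∀ v ∈ D, L ψ v = 0)
    (c₈ : ℝ) (hc₈ : 0 < c₈) (hcoer : ∀ p ∈ P ⊓ D, L p p ≥ c₈ * ‖p‖ ^ 2)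
    (Φ : H) (hΦD : Φ ∈ D) (hneg : L Φ Φ < 0)
    (a₀ b₀ : ℝ) (p₀ : H) (hp₀ : p₀ ∈ P ⊓ D) (hΦ : Φ = a₀ • χ + b₀ • ψ + p₀)
    (φt : H) (hφtD : φt ∈ D) (hφt1 : ‖φt‖ = 1)
    (hLΦφt : L Φ φt = 0)
    (a₁ : ℝ) (p₁ : H) (hp₁ : p₁ ∈ P ⊓ D) (hφt : φt = a₁ • χ + p₁) :
    a₀ * a₁ * lam₀ ^ 2 = L p₀ p₁ ∧ L φt φt > 0 := by
  have hφt' : φt = a₁ • χ + (0 : ℝ) • ψ + p₁ := by rw [hφt, zero_smul, add_zero]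
  have split {a b a' b' : ℝ} {p q : H} (hp : p ∈ P ⊓ D) (hq : q ∈ P)
      (hw : a' • χ + b' • ψ + q ∈ D) :
      L (a • χ + b • ψ + p) (a' • χ + b' • ψ + q) = -(a * a' * lam₀ ^ 2) + L p q :=
    apply_smul_add_smul_add_eq hsymm hχ hχψ hLχ hLψ hp.2 (hPχ p hp.1) (hPχ q hq) hw
  have hLΦφt' : L Φ φt = -(a₀ * a₁ * lam₀ ^ 2) + L p₀ p₁ := by
    rw [hΦ, hφt']; exact split hp₀ hp₁.1 (hφt' ▸ hφtD)
  have hLΦΦ : L Φ Φ = -(a₀ ^ 2 * lam₀ ^ 2) + L p₀ p₀ := by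
    rw [hΦ, split hp₀ hp₀.1 (hΦ ▸ hΦD)]; ring
  have hLφtφt : L φt φt = -(a₁ ^ 2 * lam₀ ^ 2) + L p₁ p₁ := by
    rw [hφt', split hp₁ hp₁.1 (hφt' ▸ hφtD)]; ring
  have key : a₀ * a₁ * lam₀ ^ 2 = L p₀ p₁ := by linarith
  refine ⟨key, ?_⟩
  have hnonneg : ∀ p ∈ P ⊓ D, 0 ≤ L p p := fun p hp ↦
    (by positivity : 0 ≤ c₈ * ‖p‖ ^ 2).trans (hcoer p hp)
  rcases eq_or_ne a₁ 0 with rfl | ha₁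
  · rw [hφt, zero_smul, zero_add] at hφt1 ⊢
    have hcoer₁ := hcoer p₁ hp₁
    rw [hφt1] at hcoer₁
    linarith
  have hcs := L.sq_apply_le_mul_of_nonneg_on hsymm _ hnonneg hp₀ hp₁
  rw [← key] at hcs
  have hp₀lt : L p₀ p₀ < a₀ ^ 2 * lam₀ ^ 2 := by linarith
  have hp₀nonneg := hnonneg p₀ hp₀
  have ha₁lam : 0 < a₁ ^ 2 * lam₀ ^ 2 := by positivity
  rw [hLφtφt]
  nlinarith

/-- with the same spectral decomposition, if `φt ∈ D` is a
unit vector orthogonal to `ψ`, `L(Φ,φt) = 0` and `φt = a₁χ + p₁`, then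
`a₀a₁lam₀² = L(p₀,p₁)` and consequently `L(φt,φt) > 0`. -/
theorem stmt11 {H : Type*} [NormedAddCommGroup H] [InnerProductSpace ℝ H] [CompleteSpace H]
    (D : Submodule ℝ H) (hD : Dense (D : Set H))
    (L : H →ₗ[ℝ] H →ₗ[ℝ] ℝ) (hsymm : ∀ v w : H, L v w = L w v)
    (χ ψ : H) (hχ : ‖χ‖ = 1) (hχψ : ⟪χ, ψ⟫ = 0)
    (P : Submodule ℝ H) (hPχ : ∀ p ∈ P, ⟪χ, p⟫ = 0) (hPψ : ∀ p ∈ P, ⟪ψ, p⟫ = 0)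
    (lam₀ : ℝ) (hlam₀ : lam₀ ≠ 0)
    (hLχ : ∀ v ∈ D, L χ v = -lam₀ ^ 2 * ⟪χ, v⟫)
    (hLψ : ∀ v ∈ D, L ψ v = 0)
    (c₈ : ℝ) (hc₈ : 0 < c₈) (hcoer : ∀ p ∈ P ⊓ D, L p p ≥ c₈ * ‖p‖ ^ 2)
    (Φ : H) (hΦD : Φ ∈ D) (hneg : L Φ Φ < 0)
    (a₀ b₀ : ℝ) (p₀ : H) (hp₀ : p₀ ∈ P ⊓ D) (hΦ : Φ = a₀ • χ + b₀ • ψ + p₀)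
    (φt : H) (hφtD : φt ∈ D) (hφt1 : ‖φt‖ = 1) (hφtψ : ⟪φt, ψ⟫ = 0)
    (hLΦφt : L Φ φt = 0)
    (a₁ : ℝ) (p₁ : H) (hp₁ : p₁ ∈ P ⊓ D) (hφt : φt = a₁ • χ + p₁) :
    a₀ * a₁ * lam₀ ^ 2 = L p₀ p₁ ∧ L φt φt > 0 :=
  stmt11_general D L hsymm χ ψ hχ hχψ P hPχ lam₀ hlam₀ hLχ hLψ c₈ hc₈ hcoer Φ hΦD hneg a₀ b₀ p₀ hp₀
    hΦ φt hφtD hφt1 hLΦφt a₁ p₁ hp₁ hφt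
end
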